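/- Let G be a locally compact abelian group and μ a weakly almost periodic measure on G. If ν ∈ X(μ), then the null weakly almost periodic part ν₀ of the Eberlein decomposition of ν belongs to X(μ₀), the hull of the null part of μ. -/

import Mathlib

open Filter Topology MeasureTheory BoundedContinuousFunction
open scoped Pointwise

variable {G : Type*}

/-- Continuous compactly supported test functions. -/
def IsCc [TopologicalSpace G] (c : G → ℂ) : Prop := Continuous c ∧ HasCompactSupport c

/-- The translate `T^s h` of a bounded continuous function, `(T^s h)(x) = h(x - s)`. -/
noncomputable def bcfTranslate [UniformSpace G] [AddCommGroup G] [IsUniformAddGroup G]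
    (h : G →ᵇ ℂ) (s : G) : G →ᵇ ℂ :=
  h.compContinuous ⟨fun x => x - s, by continuity⟩

/-- A weakly almost periodic function on `G`: bounded, uniformly continuous, with
translation orbit relatively compact in the weak topology of `(C_u(G), ‖·‖_∞)`. -/
def IsWapFn [UniformSpace G] [AddCommGroup G] [IsUniformAddGroup G] (h : G → ℂ) : Prop :=
  UniformContinuous h ∧ ∃ hb : G →ᵇ ℂ, (∀ x, hb x = h x) ∧
    IsCompact (closure (toWeakSpace ℂ (G →ᵇ ℂ) ''
      {g : G →ᵇ ℂ | ∃ s : G, g = bcfTranslate hb s}))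

/-- A Bohr (strongly) almost periodic function on `G`: bounded, uniformly continuous,
with norm-relatively compact translation orbit. -/
def IsSapFn [UniformSpace G] [AddCommGroup G] [IsUniformAddGroup G] (h : G → ℂ) : Prop :=
  UniformContinuous h ∧ ∃ hb : G →ᵇ ℂ, (∀ x, hb x = h x) ∧
    IsCompact (closure {g : G →ᵇ ℂ | ∃ s : G, g = bcfTranslate hb s})

/-- A Følner sequence for the Haar measure `θ`. -/
def IsFolner [TopologicalSpace G] [AddCommGroup G] [MeasurableSpace G]
    (θ : Measure G) (A : ℕ → Set G) : Prop :=
  (∀ n, IsCompact (A n)) ∧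
    ∀ x : G, Tendsto (fun n => θ (symmDiff (A n) ((fun t => x + t) '' A n)) / θ (A n))
      atTop (𝓝 0)

/-- `m` is the mean of `h`: for every Følner sequence `Aₙ`,
`(1/θ(Aₙ)) ∫_{x+Aₙ} h → m` uniformly in `x`. -/
def IsMeanFn [TopologicalSpace G] [AddCommGroup G] [MeasurableSpace G]
    (θ : Measure G) (h : G → ℂ) (m : ℂ) : Prop :=
  ∀ A : ℕ → Set G, IsFolner θ A →
    TendstoUniformly
      (fun n x => ((θ (A n)).toReal)⁻¹ • ∫ t in (fun s => x + s) '' A n, h t ∂θ)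
      (fun _ => m) atTop

/-- A measure, viewed as a functional on test functions. -/
abbrev MeasF (G : Type*) := (G → ℂ) → ℂ

/-- The convolution `(c ∗ μ)(x) = ∫ c(x - t) dμ(t)` of a test function with a measure. -/
def convF [AddCommGroup G] (c : G → ℂ) (μ : MeasF G) : G → ℂ := fun x => μ fun t => c (x - t)

/-- `μ` is a (complex Radon) measure: a linear functional on `C_c(G)` which is continuous
in the inductive limit topology (bounded on each `C(G:K)`). -/
def IsRadonF [TopologicalSpace G] (μ : MeasF G) : Prop :=
  (∀ f g : G → ℂ, IsCc f → IsCc g → μ (f + g) = μ f + μ g) ∧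
  (∀ (a : ℂ) (f : G → ℂ), IsCc f → μ (a • f) = a * μ f) ∧
  (∀ K : Set G, IsCompact K → ∃ C : ℝ, ∀ f : G → ℂ, Continuous f → tsupport f ⊆ K →
    ‖μ f‖ ≤ C * ⨆ x, ‖f x‖)

/-- `μ` is a translation bounded measure: a Radon measure with `c ∗ μ ∈ C_u(G)`
(bounded and uniformly continuous) for every test function `c`. -/
def IsTbF [UniformSpace G] [AddCommGroup G] [IsUniformAddGroup G] (μ : MeasF G) : Prop :=
  IsRadonF μ ∧ ∀ c : G → ℂ, IsCc c →
    UniformContinuous (convF c μ) ∧ ∃ C : ℝ, ∀ x, ‖convF c μ x‖ ≤ C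

/-- A weakly almost periodic measure: `c ∗ μ ∈ WAP(G)` for all test functions `c`. -/
def IsWapM [UniformSpace G] [AddCommGroup G] [IsUniformAddGroup G] (μ : MeasF G) : Prop :=
  IsTbF μ ∧ ∀ c : G → ℂ, IsCc c → IsWapFn (convF c μ)

/-- A strongly almost periodic measure: `c ∗ μ` is Bohr almost periodic for all `c`. -/
def IsSapM [UniformSpace G] [AddCommGroup G] [IsUniformAddGroup G] (μ : MeasF G) : Prop :=
  IsTbF μ ∧ ∀ c : G → ℂ, IsCc c → IsSapFn (convF c μ)

/-- A null weakly almost periodic measure: weakly almost periodic with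
`M(|c ∗ μ|) = 0` for all test functions `c`. -/
def IsWap0M [UniformSpace G] [AddCommGroup G] [IsUniformAddGroup G] [MeasurableSpace G]
    (θ : Measure G) (μ : MeasF G) : Prop :=
  IsWapM μ ∧ ∀ c : G → ℂ, IsCc c →
    IsMeanFn θ (fun x => (‖convF c μ x‖ : ℂ)) 0

/-- The translate `T^t μ = δ_t ∗ μ` of a measure. -/
def translateM [AddCommGroup G] (t : G) (μ : MeasF G) : MeasF G :=
  fun f => μ fun x => f (t + x)

/-- The vague topology on measures: the weak-* topology from `C_c(G)`. -/
noncomputable def vagueTop [TopologicalSpace G] : TopologicalSpace (MeasF G) :=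
  TopologicalSpace.induced (fun μ => fun c : {c : G → ℂ // IsCc c} => μ c.1)
    inferInstance

/-- The hull `X(μ)`: the vague closure of the translation orbit of `μ`. -/
def hullM [TopologicalSpace G] [AddCommGroup G] (μ : MeasF G) : Set (MeasF G) :=
  @closure _ vagueTop {ν | ∃ t : G, ν = translateM t μ}

/-!
Choose an ultrafilter `𝒰` on `G` along which `T^t μ → ν` vaguely, and fix a test function `c`.
Along `𝒰` the translates of `c ∗ μs` converge in norm (their orbit is relatively compact) to
some `φ`, and those of `c ∗ μ₀` converge weakly to some `ψ`. The functions with mean modulus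
zero form a closed subspace, which is weakly closed, so `ψ` has mean modulus zero. Then
`φ - c ∗ νs = c ∗ ν₀ - ψ` is Bohr almost periodic with mean modulus zero, hence vanishes, so the
translates of `c ∗ μ₀` converge to `c ∗ ν₀`: that is `T^t μ₀ → ν₀` vaguely.

The means are taken along one Følner sequence. It consists of iterated sumsets `K + ⋯ + K` of
large compact neighbourhoods `K`, whose Haar measure grows only polynomially in the number of
summands, so that some step of the iteration increases the measure by an arbitrarily small factor.
-/

open scoped ENNReal

section IterSumset

variable [AddCommGroup G] {K : Set G}

-- `iterSumset K n` has `n + 1` summands.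
def iterSumset (K : Set G) : ℕ → Set G
  | 0 => K
  | n + 1 => iterSumset K n + K

lemma iterSumset_subset_succ (h0 : (0 : G) ∈ K) (n : ℕ) : iterSumset K n ⊆ iterSumset K (n + 1) :=
  fun x hx => ⟨x, hx, 0, h0, add_zero x⟩

lemma subset_iterSumset (h0 : (0 : G) ∈ K) : ∀ n, K ⊆ iterSumset K n
  | 0 => subset_rfl
  | n + 1 => (subset_iterSumset h0 n).trans (iterSumset_subset_succ h0 n)

lemma image_add_iterSumset_subset {x : G} (hx : x ∈ K) (n : ℕ) :
    (x + ·) '' iterSumset K n ⊆ iterSumset K (n + 1) := by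
  rintro - ⟨a, ha, rfl⟩
  exact ⟨a, ha, x, hx, add_comm a x⟩

lemma iterSumset_subset_iUnion [DecidableEq G] {F : Finset G} (hKF : K + K ⊆ (F : Set G) + K)
    (n : ℕ) :
    iterSumset K n ⊆ ⋃ k ∈ Fintype.piFinset (fun _ : F => Finset.range (n + 1)),
      (∑ i, k i • (i : G) + ·) '' K := by
  induction n with
  | zero =>
    intro y hy
    exact Set.mem_iUnion₂.2 ⟨0, Fintype.mem_piFinset.2 fun _ => by simp, y, hy, by simp⟩
  | succ n ih =>
    rintro - ⟨a, ha, v, hv, rfl⟩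
    obtain ⟨k, hk, w, hw, rfl⟩ := Set.mem_iUnion₂.1 (ih ha)
    obtain ⟨f, hf, z, hz, hfz⟩ := hKF (Set.add_mem_add hw hv)
    refine Set.mem_iUnion₂.2 ⟨k + Pi.single ⟨f, hf⟩ 1, ?_, z, hz, ?_⟩
    · refine Fintype.mem_piFinset.2 fun i => Finset.mem_range.2 ?_
      have := Finset.mem_range.1 (Fintype.mem_piFinset.1 hk i)
      simp only [Pi.add_apply, Pi.single_apply]
      split_ifs <;> omega
    · simp only [Pi.add_apply, add_smul, Finset.sum_add_distrib, Pi.single_apply, ite_smul,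
        one_smul, zero_smul, Finset.sum_ite_eq', Finset.mem_univ, if_true]
      simp only at hfz
      rw [add_assoc, hfz, add_assoc]

variable [TopologicalSpace G] [IsTopologicalAddGroup G]

lemma isCompact_iterSumset (hK : IsCompact K) : ∀ n, IsCompact (iterSumset K n)
  | 0 => hK
  | n + 1 => (isCompact_iterSumset hK n).add hK

lemma isClosed_iterSumset (hK : IsCompact K) (hK' : IsClosed K) : ∀ n, IsClosed (iterSumset K n)
  | 0 => hK'
  | n + 1 => hK'.add_left_of_isCompact (isCompact_iterSumset hK n)

lemma exists_finset_add_subset_add [DecidableEq G] (hK : IsCompact K)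
    (hKi : (interior K).Nonempty) : ∃ F : Finset G, K + K ⊆ (F : Set G) + K := by
  obtain ⟨t, ht⟩ := compact_covered_by_add_left_translates (hK.add hK) hKi
  refine ⟨t.image Neg.neg, fun y hy => ?_⟩
  obtain ⟨g, hg, hgy⟩ := Set.mem_iUnion₂.1 (ht hy)
  exact ⟨-g, by simpa using hg, g + y, hgy, neg_add_cancel_left g y⟩

end IterSumset

lemma exists_succ_le_one_add_mul_of_le_mul_pow {a : ℕ → ℝ} (ha : 0 < a 0) {C : ℝ} {m : ℕ}
    (haC : ∀ n, a n ≤ C * ((n : ℝ) + 1) ^ m) {ε : ℝ} (hε : 0 < ε) :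
    ∃ n, a (n + 1) ≤ (1 + ε) * a n := by
  by_contra! h
  have hexp : ∀ n, (1 + ε) ^ n * a 0 ≤ a n := by
    intro n
    induction n with
    | zero => simp
    | succ n ih =>
      calc (1 + ε) ^ (n + 1) * a 0 = (1 + ε) * ((1 + ε) ^ n * a 0) := by ring
        _ ≤ (1 + ε) * a n := by gcongr
        _ ≤ a (n + 1) := (h n).le
  have hC : 0 < C := by simpa using ha.trans_le (haC 0)
  have hlim : Tendsto (fun n : ℕ => ((n + 1 : ℕ) : ℝ) ^ m / (1 + ε) ^ (n + 1)) atTop (𝓝 0) :=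
    (tendsto_pow_const_div_const_pow_of_one_lt m (by linarith)).comp (tendsto_add_atTop_nat 1)
  obtain ⟨n, hn⟩ := (hlim.eventually_lt_const (by positivity : 0 < a 0 / ((1 + ε) * C))).exists
  rw [div_lt_div_iff₀ (by positivity) (by positivity), pow_succ] at hn
  have := mul_le_mul_of_nonneg_left ((hexp n).trans (haC n)) (by positivity : (0 : ℝ) ≤ 1 + ε)
  push_cast at hn
  nlinarith

section Folner

variable [TopologicalSpace G] [AddCommGroup G] [MeasurableSpace G] (θ : Measure G)

lemma measure_iterSumset_ne_zero [θ.IsOpenPosMeasure] {K : Set G} (h0 : (0 : G) ∈ interior K)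
    (n : ℕ) : θ (iterSumset K n) ≠ 0 :=
  ((isOpen_interior.measure_pos θ ⟨0, h0⟩).trans_le
    (measure_mono (interior_subset.trans (subset_iterSumset (interior_subset h0) n)))).ne'

variable [IsTopologicalAddGroup G] [BorelSpace G]

lemma measure_image_add_left [θ.IsAddLeftInvariant] (x : G) (S : Set G) :
    θ ((x + ·) '' S) = θ S := by
  rw [Set.image_add_left, measure_preimage_add]

lemma exists_measure_iterSumset_le [θ.IsAddLeftInvariant] {K : Set G} (hK : IsCompact K)
    (hKi : (interior K).Nonempty) :
    ∃ m : ℕ, ∀ n : ℕ, θ (iterSumset K n) ≤ ((n + 1 : ℕ) : ℝ≥0∞) ^ m * θ K := by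
  classical
  obtain ⟨F, hF⟩ := exists_finset_add_subset_add hK hKi
  refine ⟨F.card, fun n => ?_⟩
  calc θ (iterSumset K n)
      ≤ ∑ k ∈ Fintype.piFinset (fun _ : F => Finset.range (n + 1)),
          θ ((∑ i, k i • (i : G) + ·) '' K) :=
        (measure_mono (iterSumset_subset_iUnion hF n)).trans (measure_biUnion_finset_le _ _)
    _ = ((n + 1 : ℕ) : ℝ≥0∞) ^ F.card * θ K := by
        simp [Fintype.card_piFinset]

lemma exists_measure_iterSumset_sdiff_le [θ.IsAddHaarMeasure] {K : Set G} (hK : IsCompact K)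
    (hK' : IsClosed K) (h0 : (0 : G) ∈ interior K) {δ : ℝ≥0∞} (hδ : δ ≠ 0) :
    ∃ i, θ (iterSumset K (i + 1) \ iterSumset K i) ≤ δ * θ (iterSumset K i) := by
  have hpos : ∀ i, θ (iterSumset K i) ≠ 0 := fun i => measure_iterSumset_ne_zero θ h0 i
  have hfin : ∀ i, θ (iterSumset K i) ≠ ∞ := fun i => (isCompact_iterSumset hK i).measure_ne_top
  rcases eq_or_ne δ ∞ with rfl | hδ'
  · exact ⟨0, by simp [ENNReal.top_mul (hpos 0)]⟩
  obtain ⟨m, hm⟩ := exists_measure_iterSumset_le θ hK ⟨0, h0⟩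
  have hgrowth : ∀ i, θ.real (iterSumset K i) ≤ θ.real K * ((i : ℝ) + 1) ^ m := by
    intro i
    have := ENNReal.toReal_mono (ENNReal.mul_ne_top (by simp) hK.measure_ne_top) (hm i)
    rw [ENNReal.toReal_mul, ENNReal.toReal_pow, ENNReal.toReal_natCast] at this
    push_cast at this
    simpa only [measureReal_def, mul_comm] using this
  obtain ⟨i, hi⟩ := exists_succ_le_one_add_mul_of_le_mul_pow
    (ENNReal.toReal_pos (hpos 0) (hfin 0)) hgrowth (ENNReal.toReal_pos hδ hδ')
  refine ⟨i, (ENNReal.toReal_le_toReal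
    (ne_top_of_le_ne_top (hfin (i + 1)) (measure_mono Set.sdiff_subset))
    (ENNReal.mul_ne_top hδ' (hfin i))).1 ?_⟩
  rw [← measureReal_def, measureReal_sdiff (iterSumset_subset_succ (interior_subset h0) i)
    (isClosed_iterSumset hK hK' i).measurableSet (hfin (i + 1)), ENNReal.toReal_mul]
  simp only [measureReal_def] at hi ⊢
  linarith

lemma isFolner_of_image_add_subset [θ.IsAddLeftInvariant] {A B : ℕ → Set G}
    (hA : ∀ n, IsCompact (A n))
    (hAB : Tendsto (fun n => θ (B n \ A n) / θ (A n)) atTop (𝓝 0))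
    (hB : ∀ x, ∀ᶠ n in atTop, (x + ·) '' A n ⊆ B n ∧ (-x + ·) '' A n ⊆ B n) :
    IsFolner θ A := by
  refine ⟨hA, fun x => ?_⟩
  have h2 : Tendsto (fun n => 2 * (θ (B n \ A n) / θ (A n))) atTop (𝓝 0) := by
    simpa using ENNReal.Tendsto.const_mul hAB (Or.inr ENNReal.ofNat_ne_top)
  refine tendsto_of_tendsto_of_tendsto_of_le_of_le' tendsto_const_nhds h2
    (Eventually.of_forall fun _ => zero_le) ?_
  filter_upwards [hB x] with n ⟨hxB, hxB'⟩
  rw [← mul_div_assoc]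
  refine ENNReal.div_le_div_right ?_ _
  have hleft : θ (A n \ (x + ·) '' A n) = θ ((-x + ·) '' A n \ A n) := by
    rw [← measure_image_add_left θ (-x), Set.image_sdiff (add_right_injective (-x)),
      Set.image_image]
    simp
  calc θ (symmDiff (A n) ((x + ·) '' A n))
      ≤ θ (A n \ (x + ·) '' A n) + θ ((x + ·) '' A n \ A n) := by
        rw [Set.symmDiff_def]; exact measure_union_le _ _
    _ ≤ θ (B n \ A n) + θ (B n \ A n) := by
        rw [hleft]
        gcongr
    _ = 2 * θ (B n \ A n) := (two_mul _).symm

lemma exists_isFolner [LocallyCompactSpace G] [SigmaCompactSpace G] [θ.IsAddHaarMeasure] :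
    ∃ A : ℕ → Set G, IsFolner θ A ∧ ∀ n, θ (A n) ≠ 0 ∧ θ (A n) ≠ ∞ := by
  obtain ⟨V, hVc, hV⟩ := exists_compact_mem_nhds (0 : G)
  set L : ℕ → Set G := fun n => closure (compactCovering G n ∪ V)
  set K : ℕ → Set G := fun n => L n ∪ -L n
  have hLc : ∀ n, IsCompact (L n) := fun n =>
    ((isCompact_compactCovering G n).union hVc).closure
  have hKc : ∀ n, IsCompact (K n) := fun n => (hLc n).union (hLc n).neg
  have hKcl : ∀ n, IsClosed (K n) := fun n => isClosed_closure.union isClosed_closure.neg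
  have hVK : ∀ n, V ⊆ K n := fun n =>
    (Set.subset_union_right.trans subset_closure).trans Set.subset_union_left
  have h0K : ∀ n, (0 : G) ∈ interior (K n) := fun n =>
    interior_mono (hVK n) (mem_interior_iff_mem_nhds.2 hV)
  have hKexh : ∀ x : G, ∀ᶠ n in atTop, x ∈ K n ∧ -x ∈ K n := by
    intro x
    obtain ⟨N, hN⟩ := Set.mem_iUnion.1 (iUnion_compactCovering G ▸ Set.mem_univ x)
    filter_upwards [eventually_ge_atTop N] with n hn
    have hxL : x ∈ L n := subset_closure (Or.inl (compactCovering_subset G hn hN))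
    exact ⟨Or.inl hxL, Or.inr (by simpa using hxL)⟩
  choose I hI using fun n : ℕ => exists_measure_iterSumset_sdiff_le θ (hKc n) (hKcl n) (h0K n)
    (ENNReal.inv_ne_zero.2 (ENNReal.natCast_ne_top n))
  refine ⟨fun n => iterSumset (K n) (I n),
    isFolner_of_image_add_subset θ (B := fun n => iterSumset (K n) (I n + 1))
      (fun n => isCompact_iterSumset (hKc n) _) ?_ fun x => ?_,
    fun n => ⟨measure_iterSumset_ne_zero θ (h0K n) _,
      (isCompact_iterSumset (hKc n) _).measure_ne_top⟩⟩
  · exact tendsto_of_tendsto_of_tendsto_of_le_of_le tendsto_const_nhds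
      ENNReal.tendsto_inv_nat_nhds_zero (fun _ => zero_le) fun n => ENNReal.div_le_of_le_mul (hI n)
  · filter_upwards [hKexh x] with n ⟨hx, hx'⟩
    exact ⟨image_add_iterSumset_subset hx _, image_add_iterSumset_subset hx' _⟩

end Folner

lemma Submodule.toWeakSpace_symm_mem_of_mem_closure {E : Type*} [NormedAddCommGroup E]
    [NormedSpace ℂ E] {N : Submodule ℂ E} (hN : IsClosed (N : Set E)) {S : Set E}
    (hS : S ⊆ N) {w : WeakSpace ℂ E} (hw : w ∈ closure (toWeakSpace ℂ E '' S)) :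
    (toWeakSpace ℂ E).symm w ∈ N := by
  have hconv : Convex ℝ (N : Set E) := (N.restrictScalars ℝ).convex
  obtain ⟨v, hv, rfl⟩ : w ∈ toWeakSpace ℂ E '' closure N := by
    rw [hconv.toWeakSpace_closure ℂ]
    exact closure_mono (Set.image_mono hS) hw
  simpa [hN.closure_eq] using hv

section MeanNorm

variable [TopologicalSpace G] [MeasurableSpace G] [OpensMeasurableSpace G]
  (θ : Measure G)

lemma BoundedContinuousFunction.integrableOn_norm (h : G →ᵇ ℂ) {B : Set G} (hB : θ B ≠ ∞) :
    IntegrableOn (fun t => ‖h t‖) B θ := by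
  have : IsFiniteMeasure (θ.restrict B) := isFiniteMeasure_restrict.2 hB
  exact (h.integrable _).norm

noncomputable def meanNormSeminorm (B : Set G) : Seminorm ℂ (G →ᵇ ℂ) :=
  Seminorm.of (fun h => ⨍ t in B, ‖h t‖ ∂θ)
    (fun h k => by
      rcases eq_or_ne (θ B) ∞ with hB | hB
      · simp [setAverage_eq, measureReal_def, hB]
      simp only [setAverage_eq, smul_eq_mul, ← mul_add]
      gcongr
      rw [← integral_add (h.integrableOn_norm θ hB) (k.integrableOn_norm θ hB)]
      exact setIntegral_mono ((h + k).integrableOn_norm θ hB)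
        ((h.integrableOn_norm θ hB).add (k.integrableOn_norm θ hB)) fun t => norm_add_le _ _)
    (fun a h => by
      simp only [setAverage_eq, coe_smul, smul_eq_mul, norm_mul, integral_const_mul]
      ring)

lemma meanNormSeminorm_apply (B : Set G) (h : G →ᵇ ℂ) :
    meanNormSeminorm θ B h = ⨍ t in B, ‖h t‖ ∂θ := rfl

lemma meanNormSeminorm_le_norm (B : Set G) (h : G →ᵇ ℂ) : meanNormSeminorm θ B h ≤ ‖h‖ := by
  rw [meanNormSeminorm_apply, setAverage_eq, smul_eq_mul]
  rcases eq_or_ne (θ B) ∞ with hB | hB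
  · simp [measureReal_def, hB]
  have hint : ∫ t in B, ‖h t‖ ∂θ ≤ θ.real B * ‖h‖ := by
    calc ∫ t in B, ‖h t‖ ∂θ ≤ ∫ _ in B, ‖h‖ ∂θ :=
          setIntegral_mono (h.integrableOn_norm θ hB) (integrableOn_const hB)
            fun t => h.norm_coe_le_norm t
      _ = θ.real B * ‖h‖ := by rw [setIntegral_const, smul_eq_mul]
  rcases eq_or_ne (θ.real B) 0 with h0 | h0
  · simp [h0]
  calc (θ.real B)⁻¹ * ∫ t in B, ‖h t‖ ∂θ ≤ (θ.real B)⁻¹ * (θ.real B * ‖h‖) := by gcongr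
    _ = ‖h‖ := by field_simp

variable [AddCommGroup G]

/-- The functions `h` with `M(|h|) = 0`, the mean being taken along the translates of the single
sequence `A` rather than along every Følner sequence. -/
def nullMeanSubmodule (A : ℕ → Set G) : Submodule ℂ (G →ᵇ ℂ) where
  carrier := {h | ∀ ε > 0, ∀ᶠ n in atTop, ∀ x : G, meanNormSeminorm θ ((x + ·) '' A n) h < ε}
  zero_mem' ε hε := Eventually.of_forall fun n x => by simpa using hε
  add_mem' {h k} hh hk ε hε := by
    filter_upwards [hh (ε / 2) (half_pos hε), hk (ε / 2) (half_pos hε)] with n hn hn' x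
    calc meanNormSeminorm θ ((x + ·) '' A n) (h + k)
        ≤ meanNormSeminorm θ ((x + ·) '' A n) h + meanNormSeminorm θ ((x + ·) '' A n) k :=
          map_add_le_add _ h k
      _ < ε / 2 + ε / 2 := add_lt_add (hn x) (hn' x)
      _ = ε := add_halves ε
  smul_mem' c h hh ε hε := by
    filter_upwards [hh (ε / (‖c‖ + 1)) (by positivity)] with n hn x
    rw [map_smul_eq_mul]
    calc ‖c‖ * meanNormSeminorm θ ((x + ·) '' A n) h ≤ ‖c‖ * (ε / (‖c‖ + 1)) := by
          gcongr; exact (hn x).le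
      _ < ε := by
          rw [mul_div_assoc', div_lt_iff₀ (by positivity)]
          nlinarith

lemma isClosed_nullMeanSubmodule (A : ℕ → Set G) :
    IsClosed (nullMeanSubmodule θ A : Set (G →ᵇ ℂ)) := by
  refine isClosed_of_closure_subset fun h hh ε hε => ?_
  obtain ⟨k, hk, hhk⟩ := Metric.mem_closure_iff.1 hh (ε / 2) (half_pos hε)
  filter_upwards [hk (ε / 2) (half_pos hε)] with n hn x
  calc meanNormSeminorm θ ((x + ·) '' A n) h
      ≤ meanNormSeminorm θ ((x + ·) '' A n) k + meanNormSeminorm θ ((x + ·) '' A n) (h - k) := by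
        simpa using map_add_le_add (meanNormSeminorm θ ((x + ·) '' A n)) k (h - k)
    _ ≤ meanNormSeminorm θ ((x + ·) '' A n) k + ‖h - k‖ := by
        gcongr; exact meanNormSeminorm_le_norm θ _ _
    _ < ε / 2 + ε / 2 := by
        rw [← dist_eq_norm]; exact add_lt_add (hn x) hhk
    _ = ε := add_halves ε

end MeanNorm

section Orbit

variable [UniformSpace G] [AddCommGroup G] [IsUniformAddGroup G]

def bcfOrbit (h : G →ᵇ ℂ) : Set (G →ᵇ ℂ) := {g | ∃ s : G, g = bcfTranslate h s}

@[simp]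
lemma bcfTranslate_apply (h : G →ᵇ ℂ) (s x : G) : bcfTranslate h s x = h (x - s) := rfl

lemma bcfTranslate_bcfTranslate (h : G →ᵇ ℂ) (t s : G) :
    bcfTranslate (bcfTranslate h t) s = bcfTranslate h (t + s) := by
  ext x
  simp [sub_sub, add_comm]

lemma bcfTranslate_sub (h k : G →ᵇ ℂ) (s : G) :
    bcfTranslate (h - k) s = bcfTranslate h s - bcfTranslate k s := by
  ext x
  simp

lemma lipschitzWith_bcfTranslate (s : G) : LipschitzWith 1 (bcfTranslate · s : (G →ᵇ ℂ) → _) :=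
  LipschitzWith.of_dist_le_mul fun h k => by
    simpa using (dist_le dist_nonneg).2 fun x => dist_coe_le_dist (f := h) (g := k) (x - s)

lemma bcfOrbit_subset_closure_of_mem_closure {h g : G →ᵇ ℂ} (hg : g ∈ closure (bcfOrbit h)) :
    bcfOrbit g ⊆ closure (bcfOrbit h) := by
  rintro - ⟨s, rfl⟩
  have hmaps : Set.MapsTo (bcfTranslate · s) (bcfOrbit h) (bcfOrbit h) := by
    rintro - ⟨t, rfl⟩
    exact ⟨t + s, bcfTranslate_bcfTranslate h t s⟩
  exact hmaps.closure (lipschitzWith_bcfTranslate s).continuous hg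

lemma isCompact_closure_bcfOrbit_of_mem_closure {h g : G →ᵇ ℂ}
    (hh : IsCompact (closure (bcfOrbit h))) (hg : g ∈ closure (bcfOrbit h)) :
    IsCompact (closure (bcfOrbit g)) :=
  hh.of_isClosed_subset isClosed_closure
    (closure_minimal (bcfOrbit_subset_closure_of_mem_closure hg) isClosed_closure)

lemma isCompact_closure_bcfOrbit_sub {h k : G →ᵇ ℂ} (hh : IsCompact (closure (bcfOrbit h)))
    (hk : IsCompact (closure (bcfOrbit k))) : IsCompact (closure (bcfOrbit (h - k))) := by
  have hD := (hh.prod hk).image (continuous_fst.sub continuous_snd)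
  refine hD.of_isClosed_subset isClosed_closure (closure_minimal ?_ hD.isClosed)
  rintro - ⟨s, rfl⟩
  exact ⟨(bcfTranslate h s, bcfTranslate k s), ⟨subset_closure ⟨s, rfl⟩, subset_closure ⟨s, rfl⟩⟩,
    (bcfTranslate_sub h k s).symm⟩

lemma exists_finset_dist_bcfTranslate_lt {d : G →ᵇ ℂ} (hd : IsCompact (closure (bcfOrbit d)))
    {r : ℝ} (hr : 0 < r) :
    ∃ F : Finset G, ∀ t, ∃ s ∈ F, dist (bcfTranslate d t) (bcfTranslate d s) < r := by
  obtain ⟨F, hF⟩ := hd.elim_finite_subcover (fun s => Metric.ball (bcfTranslate d s) r)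
    (fun _ => Metric.isOpen_ball) fun g hg => by
      obtain ⟨-, ⟨s, rfl⟩, hs⟩ := Metric.mem_closure_iff.1 hg r hr
      exact Set.mem_iUnion.2 ⟨s, hs⟩
  refine ⟨F, fun t => ?_⟩
  obtain ⟨s, hs, hts⟩ := Set.mem_iUnion₂.1 (hF (subset_closure ⟨t, rfl⟩))
  exact ⟨s, hs, hts⟩

lemma exists_finset_forall_lt_norm_sub {d : G →ᵇ ℂ} (hd : IsCompact (closure (bcfOrbit d)))
    {p : G} (hp : d p ≠ 0) : ∃ F : Finset G, ∀ t, ∃ c ∈ F, ‖d p‖ / 2 < ‖d (t - c)‖ := by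
  classical
  obtain ⟨F, hF⟩ := exists_finset_dist_bcfTranslate_lt hd (half_pos (norm_pos_iff.2 hp))
  refine ⟨F.image (· - p), fun t => ?_⟩
  obtain ⟨s, hs, hts⟩ := hF t
  refine ⟨s - p, Finset.mem_image_of_mem _ hs, ?_⟩
  have hpt : ‖d p - d (t - (s - p))‖ < ‖d p‖ / 2 := by
    have := (dist_coe_le_dist (t + p)).trans_lt hts
    rwa [bcfTranslate_apply, bcfTranslate_apply, add_sub_cancel_left, dist_eq_norm,
      show t + p - s = t - (s - p) by abel] at this
  linarith [norm_sub_norm_le (d p) (d (t - (s - p)))]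

end Orbit

section NullMean

variable [UniformSpace G] [AddCommGroup G] [IsUniformAddGroup G]
  [MeasurableSpace G] [BorelSpace G] (θ : Measure G) [θ.IsAddLeftInvariant]

lemma meanNormSeminorm_image_add_bcfTranslate (B : Set G) (h : G →ᵇ ℂ) (s : G) :
    meanNormSeminorm θ ((s + ·) '' B) (bcfTranslate h s) = meanNormSeminorm θ B h := by
  have hemb : MeasurableEmbedding (s + ·) := (Homeomorph.addLeft s).measurableEmbedding
  simp only [meanNormSeminorm_apply, setAverage_eq, measureReal_def, measure_image_add_left,
    (measurePreserving_add_left θ s).setIntegral_image_emb hemb, bcfTranslate_apply,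
    add_sub_cancel_left]

lemma bcfTranslate_mem_nullMeanSubmodule {A : ℕ → Set G} {h : G →ᵇ ℂ}
    (hh : h ∈ nullMeanSubmodule θ A) (s : G) : bcfTranslate h s ∈ nullMeanSubmodule θ A := by
  intro ε hε
  filter_upwards [hh ε hε] with n hn x
  have hx : (x + ·) '' A n = (s + ·) '' ((x - s + ·) '' A n) := by
    rw [Set.image_image]
    simp_rw [← add_assoc, add_sub_cancel]
  rw [hx, meanNormSeminorm_image_add_bcfTranslate]
  exact hn _

lemma mem_nullMeanSubmodule_of_isMeanFn {A : ℕ → Set G} (hA : IsFolner θ A) {h : G →ᵇ ℂ}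
    (hm : IsMeanFn θ (fun x => (‖h x‖ : ℂ)) 0) : h ∈ nullMeanSubmodule θ A := by
  intro ε hε
  filter_upwards [Metric.tendstoUniformly_iff.1 (hm A hA) ε hε] with n hn x
  have hn := hn x
  rw [integral_complex_ofReal, dist_zero_left, Complex.real_smul, ← Complex.ofReal_mul,
    Complex.norm_real, Real.norm_eq_abs] at hn
  rw [meanNormSeminorm_apply, setAverage_eq, measureReal_def, measure_image_add_left]
  exact (le_abs_self _).trans_lt hn

lemma mem_nullMeanSubmodule_of_isWap0M {A : ℕ → Set G} (hA : IsFolner θ A) {ρ : MeasF G}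
    (hρ : IsWap0M θ ρ) {c : G → ℂ} (hc : IsCc c) {h : G →ᵇ ℂ} (hh : ∀ x, h x = convF c ρ x) :
    h ∈ nullMeanSubmodule θ A :=
  mem_nullMeanSubmodule_of_isMeanFn θ hA (by simpa only [hh] using hρ.2 c hc)

lemma exists_measure_le_card_mul_measure_inter {F : Finset G} {S : Set G}
    (hS : ∀ t, ∃ c ∈ F, t - c ∈ S) (B : Set G) :
    ∃ x, θ B ≤ F.card * θ (S ∩ (x + ·) '' B) := by
  obtain ⟨c₀, hc₀, -⟩ := hS 0
  obtain ⟨c, -, hmax⟩ := F.exists_max_image (fun c => θ (S ∩ (-c + ·) '' B)) ⟨c₀, hc₀⟩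
  refine ⟨-c, ?_⟩
  have hcover : B ⊆ ⋃ c ∈ F, (c + ·) '' (S ∩ (-c + ·) '' B) := by
    intro t ht
    obtain ⟨c, hc, htc⟩ := hS t
    refine Set.mem_iUnion₂.2 ⟨c, hc, t - c, ⟨htc, t, ht, ?_⟩, add_sub_cancel c t⟩
    exact neg_add_eq_sub c t
  calc θ B ≤ ∑ c ∈ F, θ ((c + ·) '' (S ∩ (-c + ·) '' B)) :=
        (measure_mono hcover).trans (measure_biUnion_finset_le _ _)
    _ = ∑ c ∈ F, θ (S ∩ (-c + ·) '' B) := by simp only [measure_image_add_left]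
    _ ≤ F.card • θ (S ∩ (-c + ·) '' B) := Finset.sum_le_card_nsmul _ _ _ hmax
    _ = F.card * θ (S ∩ (-c + ·) '' B) := nsmul_eq_mul _ _

lemma exists_le_meanNormSeminorm {d : G →ᵇ ℂ} (hd : IsCompact (closure (bcfOrbit d)))
    (hd0 : d ≠ 0) : ∃ δ > 0, ∀ B : Set G, θ B ≠ 0 → θ B ≠ ∞ →
      ∃ x, δ ≤ meanNormSeminorm θ ((x + ·) '' B) d := by
  obtain ⟨p, hp⟩ : ∃ p, d p ≠ 0 := by simpa [DFunLike.ext_iff] using hd0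
  obtain ⟨F, hF⟩ := exists_finset_forall_lt_norm_sub hd hp
  set a := ‖d p‖ / 2
  set S := {u | a ≤ ‖d u‖}
  have hcard : (0 : ℝ) < F.card := by
    obtain ⟨c, hc, -⟩ := hF 0
    exact_mod_cast Finset.card_pos.2 ⟨c, hc⟩
  refine ⟨a / F.card, by positivity, fun B hB0 hB => ?_⟩
  obtain ⟨x, hx⟩ := exists_measure_le_card_mul_measure_inter θ (S := S)
    (fun t => (hF t).imp fun c ⟨hc, h⟩ => ⟨hc, h.le⟩) B
  refine ⟨x, ?_⟩
  set X := (x + ·) '' B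
  have hXB : θ X = θ B := measure_image_add_left θ x B
  have hX : θ X ≠ ∞ := hXB ▸ hB
  have hmarkov : a * θ.real (S ∩ X) ≤ ∫ t in X, ‖d t‖ ∂θ := by
    have hS : MeasurableSet S := (isClosed_le continuous_const d.continuous.norm).measurableSet
    have := mul_meas_ge_le_integral_of_nonneg (Eventually.of_forall fun t => norm_nonneg (d t))
      (d.integrableOn_norm θ hX) a
    rwa [measureReal_restrict_apply hS] at this
  have hcount : θ.real B ≤ F.card * θ.real (S ∩ X) := by
    have := ENNReal.toReal_mono (ENNReal.mul_ne_top (by simp)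
      (ne_top_of_le_ne_top hX (measure_mono Set.inter_subset_right))) hx
    simpa [measureReal_def, ENNReal.toReal_mul] using this
  have hBpos : 0 < θ.real B := ENNReal.toReal_pos hB0 hB
  rw [meanNormSeminorm_apply, setAverage_eq, measureReal_def, hXB, ← measureReal_def,
    smul_eq_mul, le_inv_mul_iff₀ hBpos]
  calc θ.real B * (a / F.card) ≤ F.card * θ.real (S ∩ X) * (a / F.card) := by gcongr
    _ = a * θ.real (S ∩ X) := by field_simp
    _ ≤ ∫ t in X, ‖d t‖ ∂θ := hmarkov

lemma eq_zero_of_mem_nullMeanSubmodule {A : ℕ → Set G} (hA : ∀ n, θ (A n) ≠ 0 ∧ θ (A n) ≠ ∞)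
    {d : G →ᵇ ℂ} (hd : IsCompact (closure (bcfOrbit d))) (hdA : d ∈ nullMeanSubmodule θ A) :
    d = 0 := by
  by_contra hd0
  obtain ⟨δ, hδ, hmean⟩ := exists_le_meanNormSeminorm θ hd hd0
  obtain ⟨n, hn⟩ := (hdA δ hδ).exists
  obtain ⟨x, hx⟩ := hmean (A n) (hA n).1 (hA n).2
  exact (hn x).not_ge hx

end NullMean

lemma mem_closure_range_iff_exists_ultrafilter {ι X : Type*} [TopologicalSpace X] {f : ι → X}
    {x : X} : x ∈ closure (Set.range f) ↔ ∃ 𝒰 : Ultrafilter ι, Tendsto f 𝒰 (𝓝 x) := by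
  refine ⟨fun hx => ?_, fun ⟨𝒰, h𝒰⟩ => mem_closure_of_tendsto h𝒰 (.of_forall fun i => ⟨i, rfl⟩)⟩
  have : (comap f (𝓝 x)).NeBot := comap_neBot_iff.2 fun t ht => by
    obtain ⟨-, hy, i, rfl⟩ := mem_closure_iff_nhds.1 hx t ht
    exact ⟨i, hy⟩
  exact ⟨.of (comap f (𝓝 x)), (map_mono (Ultrafilter.of_le _)).trans map_comap_le⟩

lemma mem_hullM_iff {G : Type*} [TopologicalSpace G] [AddCommGroup G] {μ ν : MeasF G} :
    ν ∈ hullM μ ↔ ∃ 𝒰 : Ultrafilter G,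
      ∀ c, IsCc c → Tendsto (fun t => translateM t μ c) 𝒰 (𝓝 (ν c)) := by
  have horbit : {ρ | ∃ t : G, ρ = translateM t μ} = Set.range (translateM · μ) := by
    ext; simp [eq_comm]
  rw [hullM, vagueTop, horbit, closure_induced, ← Set.range_comp,
    mem_closure_range_iff_exists_ultrafilter]
  simp only [tendsto_pi_nhds, Subtype.forall, Function.comp_def]

section Decomposition

variable [UniformSpace G] [AddCommGroup G] [IsUniformAddGroup G]
  [MeasurableSpace G] [BorelSpace G] (θ : Measure G) [θ.IsAddLeftInvariant]

theorem tendsto_apply_sub_of_decomposition {A : ℕ → Set G}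
    (hA : ∀ n, θ (A n) ≠ 0 ∧ θ (A n) ≠ ∞) (𝒰 : Ultrafilter G) {fs f0 gs g0 : G →ᵇ ℂ}
    (hfs : IsCompact (closure (bcfOrbit fs)))
    (hf0 : IsCompact (closure (toWeakSpace ℂ (G →ᵇ ℂ) '' bcfOrbit f0)))
    (hf0A : f0 ∈ nullMeanSubmodule θ A)
    (hgs : IsCompact (closure (bcfOrbit gs))) (hg0A : g0 ∈ nullMeanSubmodule θ A)
    (hlim : ∀ r, Tendsto (fun t => fs (r - t) + f0 (r - t)) 𝒰 (𝓝 (gs r + g0 r))) (r : G) :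
    Tendsto (fun t => f0 (r - t)) 𝒰 (𝓝 (g0 r)) := by
  obtain ⟨φ, hφ, hφlim⟩ := hfs.ultrafilter_le_nhds (𝒰.map (bcfTranslate fs)) <|
    le_principal_iff.2 <| mem_map.2 <| univ_mem' fun t => subset_closure ⟨t, rfl⟩
  obtain ⟨W, hW, hWlim⟩ := hf0.ultrafilter_le_nhds
    (𝒰.map fun t => toWeakSpace ℂ (G →ᵇ ℂ) (bcfTranslate f0 t)) <|
    le_principal_iff.2 <| mem_map.2 <| univ_mem' fun t => subset_closure ⟨_, ⟨t, rfl⟩, rfl⟩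
  set ψ := (toWeakSpace ℂ (G →ᵇ ℂ)).symm W
  have hψA : ψ ∈ nullMeanSubmodule θ A :=
    Submodule.toWeakSpace_symm_mem_of_mem_closure (isClosed_nullMeanSubmodule θ A)
      (by rintro - ⟨s, rfl⟩; exact bcfTranslate_mem_nullMeanSubmodule θ hf0A s) hW
  have hφr : ∀ r, Tendsto (fun t => fs (r - t)) 𝒰 (𝓝 (φ r)) := fun r =>
    ((continuous_eval_const r).tendsto φ).comp hφlim
  have hψr : ∀ r, Tendsto (fun t => f0 (r - t)) 𝒰 (𝓝 (ψ r)) := fun r =>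
    ((WeakBilin.eval_continuous _ (evalCLM ℂ r)).tendsto W).comp hWlim
  have hdiff : φ - gs = g0 - ψ := by
    ext r
    have := tendsto_nhds_unique ((hφr r).add (hψr r)) (hlim r)
    simp only [coe_sub, Pi.sub_apply]
    linear_combination this
  -- `φ - gs` is Bohr almost periodic and `g0 - ψ` has mean zero
  have hzero : φ - gs = 0 := eq_zero_of_mem_nullMeanSubmodule θ hA
    (isCompact_closure_bcfOrbit_sub (isCompact_closure_bcfOrbit_of_mem_closure hfs hφ) hgs)
    (hdiff ▸ sub_mem hg0A hψA)
  rw [hzero, eq_comm, sub_eq_zero] at hdiff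
  exact hdiff ▸ hψr r

end Decomposition

lemma IsCc.comp_homeomorph [TopologicalSpace G] {c : G → ℂ} (hc : IsCc c) (φ : G ≃ₜ G) :
    IsCc (c ∘ φ) :=
  ⟨hc.1.comp φ.continuous, hc.2.comp_homeomorph φ⟩

lemma convF_neg_apply [AddCommGroup G] (c : G → ℂ) (ρ : MeasF G) (z : G) :
    convF (fun y => c (-y)) ρ z = ρ fun x => c (x - z) := by
  simp only [convF, neg_sub]

lemma translateM_apply_sub [AddCommGroup G] (t : G) (ρ : MeasF G) (c : G → ℂ) (r : G) :
    translateM t ρ (fun x => c (x - r)) = ρ fun x => c (x - (r - t)) := by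
  simp only [translateM]
  congr! 2 with x
  rw [sub_sub_eq_add_sub, add_comm x t]

theorem null_part_mem_hull_null_part_general [UniformSpace G] [AddCommGroup G] [IsUniformAddGroup G]
    [LocallyCompactSpace G] [SigmaCompactSpace G] [MeasurableSpace G] [BorelSpace G]
    (θ : Measure G) [θ.IsAddHaarMeasure]
    (μ μs μ0 : MeasF G) (hs : IsSapM μs) (h0 : IsWap0M θ μ0)
    (hsum : ∀ f : G → ℂ, IsCc f → μ f = μs f + μ0 f)
    (ν νs ν0 : MeasF G) (hν : ν ∈ hullM μ) (hνs : IsSapM νs) (hν0 : IsWap0M θ ν0)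
    (hνsum : ∀ f : G → ℂ, IsCc f → ν f = νs f + ν0 f) :
    ν0 ∈ hullM μ0 := by
  obtain ⟨𝒰, h𝒰⟩ := mem_hullM_iff.1 hν
  obtain ⟨A, hAF, hA⟩ := exists_isFolner θ
  refine mem_hullM_iff.2 ⟨𝒰, fun c hc => ?_⟩
  have hc' : IsCc fun y => c (-y) := hc.comp_homeomorph (Homeomorph.neg G)
  have hcr : ∀ r, IsCc fun x => c (x - r) := fun r => hc.comp_homeomorph (Homeomorph.subRight r)
  obtain ⟨-, fs, hfs, hfsc⟩ := hs.2 _ hc'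
  obtain ⟨-, f0, hf0, hf0c⟩ := h0.1.2 _ hc'
  obtain ⟨-, gs, hgs, hgsc⟩ := hνs.2 _ hc'
  obtain ⟨-, g0, hg0, -⟩ := hν0.1.2 _ hc'
  have hlim := tendsto_apply_sub_of_decomposition θ hA 𝒰 hfsc hf0c
    (mem_nullMeanSubmodule_of_isWap0M θ hAF h0 hc' hf0) hgsc
    (mem_nullMeanSubmodule_of_isWap0M θ hAF hν0 hc' hg0) (fun r => ?_) 0
  · convert hlim using 2 with t
    · rw [hf0, convF_neg_apply, ← translateM_apply_sub t μ0 c 0]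
      simp only [sub_zero]
    · rw [hg0, convF_neg_apply]
      simp only [sub_zero]
  · have hνr := h𝒰 _ (hcr r)
    rw [hνsum _ (hcr r)] at hνr
    convert hνr using 2 with t
    · rw [hfs, hf0, convF_neg_apply, convF_neg_apply, ← hsum _ (hcr _), translateM_apply_sub]
    · rw [hgs, hg0, convF_neg_apply, convF_neg_apply]

/-- Let `μ` be weakly almost periodic with Eberlein decomposition
`μ = μs + μ₀`. If `ν ∈ X(μ)` with Eberlein decomposition `ν = νs + ν₀`, then
`ν₀ ∈ X(μ₀)`. -/
theorem null_part_mem_hull_null_part [UniformSpace G] [AddCommGroup G] [IsUniformAddGroup G]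
    [LocallyCompactSpace G] [SigmaCompactSpace G] [MeasurableSpace G] [BorelSpace G]
    (θ : Measure G) [θ.IsAddHaarMeasure]
    (μ μs μ0 : MeasF G) (hμ : IsWapM μ) (hs : IsSapM μs) (h0 : IsWap0M θ μ0)
    (hsum : ∀ f : G → ℂ, IsCc f → μ f = μs f + μ0 f)
    (ν νs ν0 : MeasF G) (hν : ν ∈ hullM μ) (hνs : IsSapM νs) (hν0 : IsWap0M θ ν0)
    (hνsum : ∀ f : G → ℂ, IsCc f → ν f = νs f + ν0 f) :
    ν0 ∈ hullM μ0 :=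
  null_part_mem_hull_null_part_general θ μ μs μ0 hs h0 hsum ν νs ν0 hν hνs hν0 hνsum
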